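/- Let u = Σⱼ γⱼξⱼφⱼ with γⱼ = j^{−(s/d + 1/2 − 1/q)} δ^{−1/q}, ξⱼ i.i.d. with density ∝ exp(−|x|^q/2), 1 ≤ q < ∞, s > 0, δ > 0. If t < s − d/q then E exp(α ‖u‖_{X^{t,q}}^q) < ∞ for all α ∈ [0, δ/2), where ‖u‖_{X^{t,q}}^q = Σⱼ j^{tq/d + q/2 − 1} |uⱼ|^q. -/

import Mathlib

/-!
Writing `r = (s - t) q / d > 1`, the summands of `α ‖u‖^q` are `β_j |ξ_j|^q` with
`β_j = α δ⁻¹ j^{-r} ≤ α δ⁻¹ < 1/2`. Rescaling the density gives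
`E exp(β |ξ|^q) = (1 - 2β)^{-1/q}`, and `-log(1 - 2β) ≤ 2β / (1 - 2β)`, so by independence every
partial product of these moment generating functions is at most `exp(C ∑_j j^{-r}) < ∞`.
Monotone convergence passes from the partial sums to the whole series.
-/

open MeasureTheory ProbabilityTheory

open Real Finset

theorem integral_exp_neg_mul_abs_rpow {p b : ℝ} (hp : 0 < p) (hb : 0 < b) :
    ∫ x : ℝ, exp (-b * |x| ^ p) = 2 * (b ^ (-1 / p) * Gamma (1 / p + 1)) := by
  rw [integral_comp_abs (f := fun x => exp (-b * x ^ p)), integral_exp_neg_mul_rpow hp hb]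

theorem integrable_exp_neg_mul_abs_rpow {p b : ℝ} (hp : 0 < p) (hb : 0 < b) :
    Integrable fun x : ℝ => exp (-b * |x| ^ p) := by
  refine Integrable.of_integral_ne_zero ?_
  rw [integral_exp_neg_mul_abs_rpow hp hb]
  have := Gamma_pos_of_pos (by positivity : 0 < 1 / p + 1)
  positivity

noncomputable def expPowerLaw (q : ℝ) : Measure ℝ :=
  volume.withDensity fun x => ENNReal.ofReal ((∫ y : ℝ, exp (-|y| ^ q / 2))⁻¹ * exp (-|x| ^ q / 2))

theorem lintegral_exp_mul_abs_rpow_expPowerLaw {q β : ℝ} (hq : 0 < q) (hβ : β < 1 / 2) :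
    ∫⁻ x, ENNReal.ofReal (exp (β * |x| ^ q)) ∂expPowerLaw q
      = ENNReal.ofReal ((1 - 2 * β) ^ (-1 / q)) := by
  rw [expPowerLaw, lintegral_withDensity_eq_lintegral_mul _ (by fun_prop) (by fun_prop)]
  set Z := ∫ y : ℝ, exp (-|y| ^ q / 2)
  have hZ : Z = 2 * ((1 / 2) ^ (-1 / q) * Gamma (1 / q + 1)) := by
    rw [← integral_exp_neg_mul_abs_rpow hq one_half_pos]
    refine integral_congr_ae (ae_of_all _ fun x => ?_)
    ring_nf
  have hprod : ∀ x : ℝ,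
      ENNReal.ofReal (Z⁻¹ * exp (-|x| ^ q / 2)) * ENNReal.ofReal (exp (β * |x| ^ q))
        = ENNReal.ofReal (Z⁻¹ * exp (-(1 / 2 - β) * |x| ^ q)) := by
    intro x
    rw [← ENNReal.ofReal_mul (by rw [hZ]; positivity), mul_assoc, ← exp_add]
    ring_nf
  simp only [Pi.mul_apply, hprod]
  have hratio : (1 - 2 * β) ^ (-1 / q) = (1 / 2 - β) ^ (-1 / q) / (1 / 2) ^ (-1 / q) := by
    rw [← div_rpow (by linarith) (by norm_num)]
    ring_nf
  rw [← ofReal_integral_eq_lintegral_ofReal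
      ((integrable_exp_neg_mul_abs_rpow hq (by linarith)).const_mul _)
      (ae_of_all _ fun x => by rw [hZ]; positivity),
    integral_const_mul, integral_exp_neg_mul_abs_rpow hq (by linarith), hZ, hratio]
  have hG := Gamma_pos_of_pos (by positivity : 0 < 1 / q + 1)
  have hB : 0 < (1 / 2 : ℝ) ^ (-1 / q) := by positivity
  congr 1
  field_simp

theorem one_sub_rpow_neg_le_exp {y p : ℝ} (hy : y < 1) (hp : 0 < p) :
    (1 - y) ^ (-1 / p) ≤ exp (y / (p * (1 - y))) := by
  have hy' : 0 < 1 - y := sub_pos.2 hy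
  have hlog := one_sub_inv_le_log_of_pos hy'
  rw [show 1 - (1 - y)⁻¹ = -(y / (1 - y)) by field_simp; ring] at hlog
  rw [rpow_def_of_pos hy', exp_le_exp]
  calc log (1 - y) * (-1 / p) = -log (1 - y) / p := by ring
    _ ≤ y / (1 - y) / p := by gcongr; linarith
    _ = y / (p * (1 - y)) := by rw [div_div, mul_comm]

theorem lintegral_exp_mul_abs_rpow_le_of_map_eq_expPowerLaw {Ω : Type*} [MeasurableSpace Ω]
    {P : Measure Ω} {X : Ω → ℝ} {q β β₀ : ℝ} (hX : Measurable X) (hlaw : P.map X = expPowerLaw q)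
    (hq : 0 < q) (hβ0 : 0 ≤ β) (hβ : β ≤ β₀) (hβ₀ : β₀ < 1 / 2) :
    ∫⁻ ω, ENNReal.ofReal (exp (β * |X ω| ^ q)) ∂P
      ≤ ENNReal.ofReal (exp (2 * β / (q * (1 - 2 * β₀)))) := by
  rw [← lintegral_map (f := fun x => ENNReal.ofReal (exp (β * |x| ^ q))) (by fun_prop) hX, hlaw,
    lintegral_exp_mul_abs_rpow_expPowerLaw hq (by linarith)]
  refine ENNReal.ofReal_le_ofReal ((one_sub_rpow_neg_le_exp (by linarith) hq).trans ?_)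
  rw [exp_le_exp]
  gcongr
  nlinarith

theorem ofReal_exp_tsum_le_iSup (f : ℕ → ℝ) :
    ENNReal.ofReal (exp (∑' j, f j)) ≤ ⨆ n, ENNReal.ofReal (exp (∑ j ∈ range n, f j)) := by
  by_cases hf : Summable f
  · exact le_of_tendsto'
      (((ENNReal.continuous_ofReal.comp continuous_exp).tendsto _).comp hf.hasSum.tendsto_sum_nat)
      fun n => le_iSup (fun n => ENNReal.ofReal (exp (∑ j ∈ range n, f j))) n
  · rw [tsum_eq_zero_of_not_summable hf]
    exact le_iSup_of_le 0 (by simp)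

theorem lintegral_ofReal_exp_sum_eq_prod {Ω ι : Type*} [MeasurableSpace Ω] {P : Measure Ω}
    {Y : ι → Ω → ℝ} (hY : ∀ j, Measurable (Y j)) (hindep : iIndepFun Y P) (s : Finset ι) :
    ∫⁻ ω, ENNReal.ofReal (exp (∑ j ∈ s, Y j ω)) ∂P
      = ∏ j ∈ s, ∫⁻ ω, ENNReal.ofReal (exp (Y j ω)) ∂P := by
  simp_rw [exp_sum, ENNReal.ofReal_prod_of_nonneg fun j _ => (exp_pos _).le]
  exact lintegral_prod_eq_prod_lintegral_of_indepFun s _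
    (hindep.comp (fun _ y => ENNReal.ofReal (exp y)) fun _ => by fun_prop) fun j => by fun_prop

theorem integrable_exp_tsum_of_iIndepFun {Ω : Type*} [MeasurableSpace Ω] {P : Measure Ω}
    {Y : ℕ → Ω → ℝ} {b : ℕ → ℝ} (hY : ∀ j, Measurable (Y j)) (hY0 : ∀ j ω, 0 ≤ Y j ω)
    (hindep : iIndepFun Y P) (hb0 : ∀ j, 0 ≤ b j) (hb : Summable b)
    (hmgf : ∀ j, ∫⁻ ω, ENNReal.ofReal (exp (Y j ω)) ∂P ≤ ENNReal.ofReal (exp (b j))) :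
    Integrable (fun ω => exp (∑' j, Y j ω)) P := by
  have hmono : Monotone fun n ω => ENNReal.ofReal (exp (∑ j ∈ range n, Y j ω)) :=
    fun m n hmn ω => ENNReal.ofReal_le_ofReal <| exp_le_exp.2 <|
      sum_le_sum_of_subset_of_nonneg (range_mono hmn) fun j _ _ => hY0 j ω
  have hpartial : ∀ n, ∫⁻ ω, ENNReal.ofReal (exp (∑ j ∈ range n, Y j ω)) ∂P
      ≤ ENNReal.ofReal (exp (∑' j, b j)) := fun n =>
    calc ∫⁻ ω, ENNReal.ofReal (exp (∑ j ∈ range n, Y j ω)) ∂P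
        = ∏ j ∈ range n, ∫⁻ ω, ENNReal.ofReal (exp (Y j ω)) ∂P :=
          lintegral_ofReal_exp_sum_eq_prod hY hindep _
      _ ≤ ∏ j ∈ range n, ENNReal.ofReal (exp (b j)) := prod_le_prod' fun j _ => hmgf j
      _ = ENNReal.ofReal (exp (∑ j ∈ range n, b j)) := by
          rw [exp_sum, ENNReal.ofReal_prod_of_nonneg fun j _ => (exp_pos _).le]
      _ ≤ ENNReal.ofReal (exp (∑' j, b j)) :=
          ENNReal.ofReal_le_ofReal (exp_le_exp.2 (hb.sum_le_tsum _ fun j _ => hb0 j))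
  have hmeas : Measurable fun ω => ∑' j, Y j ω := Measurable.tsum hY
  refine ⟨hmeas.exp.aestronglyMeasurable, ?_⟩
  rw [hasFiniteIntegral_iff_ofReal (ae_of_all _ fun ω => (exp_pos _).le)]
  calc ∫⁻ ω, ENNReal.ofReal (exp (∑' j, Y j ω)) ∂P
      ≤ ∫⁻ ω, ⨆ n, ENNReal.ofReal (exp (∑ j ∈ range n, Y j ω)) ∂P :=
        lintegral_mono fun ω => ofReal_exp_tsum_le_iSup _
    _ = ⨆ n, ∫⁻ ω, ENNReal.ofReal (exp (∑ j ∈ range n, Y j ω)) ∂P :=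
        lintegral_iSup (fun n => by fun_prop) hmono
    _ < ⊤ := lt_of_le_of_lt (iSup_le hpartial) ENNReal.ofReal_lt_top

theorem one_lt_sub_mul_div_of_lt_sub_div {d q s t : ℝ} (hd : 0 < d) (hq : 0 < q)
    (ht : t < s - d / q) : 1 < (s - t) * q / d := by
  rw [lt_div_iff₀ hd, one_mul, ← div_lt_iff₀ hq]
  linarith

theorem besov_weight_mul_abs_coeff_mul_rpow {m δ q d s t x : ℝ} (hm : 0 < m) (hδ : 0 < δ)
    (hq : 0 < q) (hd : d ≠ 0) :
    m ^ (t * q / d + q / 2 - 1) * |m ^ (-(s / d + 1 / 2 - 1 / q)) * δ ^ (-(1 / q)) * x| ^ q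
      = δ⁻¹ * m ^ (-((s - t) * q / d)) * |x| ^ q := by
  have hexp : m ^ (t * q / d + q / 2 - 1) * m ^ (-(s / d + 1 / 2 - 1 / q) * q)
      = m ^ (-((s - t) * q / d)) := by
    rw [← rpow_add hm]
    congr 1
    field_simp
    ring
  rw [abs_mul _ x, abs_of_pos (mul_pos (rpow_pos_of_pos hm _) (rpow_pos_of_pos hδ _)),
    mul_rpow (by positivity) (abs_nonneg x), mul_rpow (by positivity) (by positivity), ← rpow_mul hm.le,
    ← rpow_mul hδ.le, show -(1 / q) * q = -1 by field_simp, rpow_neg_one, ← hexp]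
  ring

theorem besov_prior_exp_integrable
    (d : ℕ) (hd : 0 < d) (q s δ t : ℝ) (hq : 1 ≤ q) (hδ : 0 < δ)
    (ht : t < s - d / q)
    (c : ℝ) (hc : c = (∫ x : ℝ, Real.exp (-|x| ^ q / 2))⁻¹)
    (Ω : Type*) [MeasurableSpace Ω] (P : Measure Ω)
    (ξ : ℕ → Ω → ℝ) (hξm : ∀ j, Measurable (ξ j))
    (hξindep : iIndepFun ξ P)
    (hξlaw : ∀ j, Measure.map (ξ j) P
      = volume.withDensity fun x => ENNReal.ofReal (c * Real.exp (-|x| ^ q / 2)))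
    -- the coefficients `γ j` and the `X^{t,q}`-norm of `u`, indexed so that `j ≥ 1`:
    (γ : ℕ → ℝ) (hγ : ∀ j : ℕ, γ (j + 1) = (j + 1 : ℝ) ^ (-(s / d + 1 / 2 - 1 / q)) * δ ^ (-(1 / q)))
    (normq : Ω → ℝ)
    (hnorm : normq = fun ω => ∑' j : ℕ,
      ((j + 1 : ℝ) ^ (t * q / d + q / 2 - 1)) * |γ (j + 1) * ξ (j + 1) ω| ^ q)
    (α : ℝ) (hα0 : 0 ≤ α) (hα : α < δ / 2) :
    Integrable (fun ω => Real.exp (α * normq ω)) P := by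
  subst hc hnorm
  have hq0 : 0 < q := by linarith
  set r := (s - t) * q / d
  have hr : 1 < r := one_lt_sub_mul_div_of_lt_sub_div (by positivity) hq0 ht
  set a : ℕ → ℝ := fun j => δ⁻¹ * (j + 1 : ℝ) ^ (-r)
  have ha_le : ∀ j, α * a j ≤ α * δ⁻¹ := fun j => mul_le_mul_of_nonneg_left
    (mul_le_of_le_one_right (by positivity) (rpow_le_one_of_one_le_of_nonpos
      (by linarith [j.cast_nonneg (α := ℝ)]) (by linarith))) hα0
  have ha : Summable a := .mul_left _ <| by
    exact_mod_cast (summable_nat_add_iff 1).2 (Real.summable_nat_rpow.2 (by linarith))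
  have hβ₀ : α * δ⁻¹ < 1 / 2 := by
    rw [← div_eq_mul_inv, div_lt_iff₀ hδ]
    linarith
  have hgap : 0 < q * (1 - 2 * (α * δ⁻¹)) := mul_pos hq0 (by linarith)
  have key := integrable_exp_tsum_of_iIndepFun (P := P)
    (Y := fun j ω => α * a j * |ξ (j + 1) ω| ^ q)
    (b := fun j => 2 * (α * a j) / (q * (1 - 2 * (α * δ⁻¹))))
    (fun j => by fun_prop) (fun j ω => by positivity)
    ((hξindep.precomp (add_left_injective 1)).comp (fun j y => α * a j * |y| ^ q)
      fun j => by fun_prop)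
    (fun j => by positivity) (((ha.mul_left α).mul_left 2).div_const _)
    (fun j => lintegral_exp_mul_abs_rpow_le_of_map_eq_expPowerLaw (hξm _) (hξlaw _) hq0
      (by positivity) (ha_le j) hβ₀)
  convert key using 3 with ω
  rw [← tsum_mul_left]
  congr 1 with j
  rw [hγ, besov_weight_mul_abs_coeff_mul_rpow (by positivity) hδ hq0 (by positivity)]
  ring
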